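/- Let 𝓘 ⊆ 𝒫(V) be nonempty and suppose 𝓘^⊥ is nonempty, where 𝓘^⊥ := {J ⊆ V : J ⊈ I for every I ∈ 𝓘, and every proper subset J' ⊊ J satisfies J' ⊆ I for some I ∈ 𝓘} (note 𝓘^⊥ is an antichain of nonempty subsets of V). If f : X → ℝ is bounded and measurable and ‖E[f | 𝒞_𝓘]‖_{L²(μ)} > 0, then ‖f‖_{U^{V,𝓘^⊥}} > 0. -/

import Mathlib

open MeasureTheory
open scoped Classical

noncomputable section

/-- Recombine `(x_{V∖J}, x_J^ω)` into a point of `X = ∏_v X_v`. -/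
def recomb {V : Type} (X : V → Type) (J : Set V)
    (y : ∀ v : ↥(Jᶜ : Set V), X ↑v) (z : ∀ p : ↥J × Bool, X ↑p.1)
    (ω : ↥J → Bool) : ∀ v, X v := fun v =>
  if h : v ∈ J then z (⟨v, h⟩, ω ⟨v, h⟩) else y ⟨v, h⟩

/-- The integral `∫_{X⁺_J} ∏_{ω ∈ {0,1}^J} f(x_{V∖J}, x_J^ω) dμ⁺_J`. -/
def UJint {V : Type} [Fintype V] [DecidableEq V] (X : V → Type)
    [∀ v, MeasurableSpace (X v)] (μ : ∀ v, Measure (X v)) (J : Set V)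
    (f : (∀ v, X v) → ℝ) : ℝ :=
  ∫ p : (∀ v : ↥(Jᶜ : Set V), X ↑v) × (∀ q : ↥J × Bool, X ↑q.1),
    ∏ ω : ↥J → Bool, f (recomb X J p.1 p.2 ω)
    ∂((Measure.pi fun v : ↥(Jᶜ : Set V) => μ ↑v).prod
      (Measure.pi fun q : ↥J × Bool => μ ↑q.1))

/-- The seminorm `‖f‖_{U^{V,J}} = (UJint f)^{1/2^{|J|}}`. -/
def UJnorm {V : Type} [Fintype V] [DecidableEq V] (X : V → Type)
    [∀ v, MeasurableSpace (X v)] (μ : ∀ v, Measure (X v)) (J : Set V)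
    (f : (∀ v, X v) → ℝ) : ℝ :=
  (UJint X μ J f) ^ ((1 : ℝ) / 2 ^ J.ncard)

/-- The seminorm `‖f‖_{U^{V,𝓙}}`, an infimum over decompositions `f = Σ_i f_i` into
bounded measurable pieces. -/
def UFamNorm {V : Type} [Fintype V] [DecidableEq V] (X : V → Type)
    [∀ v, MeasurableSpace (X v)] (μ : ∀ v, Measure (X v)) (𝓙 : Finset (Set V))
    (f : (∀ v, X v) → ℝ) : ℝ :=
  sInf {r : ℝ | ∃ (m : ℕ) (g : ℕ → (∀ v, X v) → ℝ),
    (∀ i, (∃ C, ∀ x, |g i x| ≤ C) ∧ Measurable (g i)) ∧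
    (∀ x, f x = ∑ i ∈ Finset.range (m + 1), g i x) ∧
    r = ∑ i ∈ Finset.range (m + 1),
        (∏ J ∈ 𝓙, UJnorm X μ J (g i) ^ (2 ^ J.ncard)) ^
          ((1 : ℝ) / ∑ J ∈ 𝓙, (2 : ℝ) ^ J.ncard)}

/-- The σ-algebra `𝒞_I` on `X = ∏_v X_v` of sets depending only on the coordinates in `I`. -/
def cylAlg {V : Type} (X : V → Type) [∀ v, MeasurableSpace (X v)] (I : Set V) :
    MeasurableSpace (∀ v, X v) :=
  MeasurableSpace.comap (fun (x : ∀ v, X v) (i : ↥I) => x ↑i) MeasurableSpace.pi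

/-- The σ-algebra `𝒞_𝓘` generated by `⋃_{I ∈ 𝓘} 𝒞_I`. -/
def cylAlgFam {V : Type} (X : V → Type) [∀ v, MeasurableSpace (X v)] (𝓘 : Set (Set V)) :
    MeasurableSpace (∀ v, X v) :=
  ⨆ I ∈ 𝓘, cylAlg X I

/-- `𝓘^⊥`: the sets `J ⊆ V` not contained in any member of `𝓘`, all of whose proper
subsets are contained in some member of `𝓘`. -/
def Iperp {V : Type} (𝓘 : Set (Set V)) : Set (Set V) :=
  {J | (∀ I ∈ 𝓘, ¬ J ⊆ I) ∧ ∀ J' ⊂ J, ∃ I ∈ 𝓘, J' ⊆ I}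

/-!
If `E[f | 𝒞_𝓘] ≠ 0`, then `f` has nonzero integral over some set `P = ⋂_{I ∈ t} A_I` with
`t ⊆ 𝓘` finite and `A_I ∈ 𝒞_I`, since these sets form a π-system generating `𝒞_𝓘`.
A set `J ∈ 𝓘^⊥` is contained in no `I ∈ t`, so assigning to each `I` a coordinate of `J` outside
`I` factors `1_P = ∏_{k ∈ J} H_k` with `|H_k| ≤ 1` and `H_k` independent of `x_k`. The
Gowers–Cauchy–Schwarz inequality, one Cauchy–Schwarz step per coordinate of `J`, then gives
`|∫ g 1_P|^{2^|J|} ≤ ‖g‖_{U^{V,J}}^{2^|J|}` for every bounded measurable `g`. Taking the weighted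
geometric mean over `J ∈ 𝓘^⊥` and summing over a decomposition `f = Σ f_i` shows that
`‖f‖_{U^{V,𝓘^⊥}} ≥ |∫_P f| > 0`.
-/

theorem abs_prod_le_pow_card {ι : Type*} (s : Finset ι) {f : ι → ℝ} {C : ℝ}
    (h : ∀ i ∈ s, |f i| ≤ C) : |∏ i ∈ s, f i| ≤ C ^ s.card := by
  rw [Finset.abs_prod]
  exact (Finset.prod_le_prod (fun i _ => abs_nonneg _) h).trans_eq (Finset.prod_const C)

theorem sq_integral_le_integral_sq {Ω : Type*} [MeasurableSpace Ω] {ν : Measure Ω}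
    [IsProbabilityMeasure ν] {f : Ω → ℝ} (hf : MemLp f 2 ν) :
    (∫ x, f x ∂ν) ^ 2 ≤ ∫ x, f x ^ 2 ∂ν := by
  have := ProbabilityTheory.variance_nonneg f ν
  rw [ProbabilityTheory.variance_eq_sub hf] at this
  simpa using this

theorem le_rpow_prod_of_pow_le {ι : Type*} {s : Finset ι} (hs : s.Nonempty) {n : ι → ℕ}
    (hn : ∀ i ∈ s, 0 < n i) {a : ℝ} (ha : 0 ≤ a) {b : ι → ℝ} (hab : ∀ i ∈ s, a ^ n i ≤ b i) :
    a ≤ (∏ i ∈ s, b i) ^ ((1 : ℝ) / ∑ i ∈ s, (n i : ℝ)) := by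
  have hN : (0 : ℝ) < ∑ i ∈ s, (n i : ℝ) :=
    Finset.sum_pos (fun i hi => by exact_mod_cast hn i hi) hs
  calc a = (a ^ ∑ i ∈ s, n i) ^ ((1 : ℝ) / ∑ i ∈ s, (n i : ℝ)) := by
        rw [← Real.rpow_natCast, ← Real.rpow_mul ha, Nat.cast_sum, mul_one_div_cancel hN.ne',
          Real.rpow_one]
    _ ≤ _ := by
      rw [← Finset.prod_pow_eq_pow_sum]
      exact Real.rpow_le_rpow (by positivity) (Finset.prod_le_prod (fun i _ => by positivity) hab)
        (by positivity)

section Resampling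

variable {ι : Type*} [Fintype ι] [DecidableEq ι] {α : ι → Type*} [∀ i, MeasurableSpace (α i)]
  {μ : ∀ i, Measure (α i)} [∀ i, IsProbabilityMeasure (μ i)]

theorem measurePreserving_update (j : ι) :
    MeasurePreserving (fun p : (∀ i, α i) × α j => Function.update p.1 j p.2)
      ((Measure.pi μ).prod (μ j)) (Measure.pi μ) := by
  refine ⟨by fun_prop, (Measure.pi_eq fun s hs => ?_).symm⟩
  have hpre : (fun p : (∀ i, α i) × α j => Function.update p.1 j p.2) ⁻¹' Set.univ.pi s
      = Set.univ.pi (Function.update s j Set.univ) ×ˢ s j := by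
    ext ⟨x, a⟩
    simp only [Set.mem_preimage, Set.mem_prod, Set.mem_univ_pi]
    grind
  rw [Measure.map_apply (by fun_prop) (.univ_pi hs), hpre, Measure.prod_prod, Measure.pi_pi,
    ← Finset.prod_erase_mul _ _ (Finset.mem_univ j),
    ← Finset.prod_erase_mul _ _ (Finset.mem_univ j)]
  simp only [Function.update_self, measure_univ, mul_one]
  congr 1
  exact Finset.prod_congr rfl fun i hi => by rw [Function.update_of_ne (Finset.ne_of_mem_erase hi)]

theorem integral_eq_integral_integral_update {E : Type*} [NormedAddCommGroup E] [NormedSpace ℝ E]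
    (j : ι) {φ : (∀ i, α i) → E} (hφ : Integrable φ (Measure.pi μ)) :
    ∫ x, φ x ∂Measure.pi μ = ∫ x, ∫ a, φ (Function.update x j a) ∂μ j ∂Measure.pi μ := by
  have h := measurePreserving_update (μ := μ) j
  conv_lhs => rw [← h.map_eq]
  rw [integral_map h.measurable.aemeasurable (by rw [h.map_eq]; exact hφ.aestronglyMeasurable)]
  exact integral_prod _ (h.integrable_comp_of_integrable hφ)

end Resampling

section CauchySchwarz

open Function

variable {ι : Type*} [DecidableEq ι] {Y : ι → Type*} [∀ i, MeasurableSpace (Y i)]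
  {ρ : ∀ i, Measure (Y i)} [∀ i, IsProbabilityMeasure (ρ i)] {j : ι} {F G : (∀ i, Y i × Y i) → ℝ}
  {C : ℝ}

variable (ρ j) in
def fstAvg (F : (∀ i, Y i × Y i) → ℝ) (w : ∀ i, Y i × Y i) : ℝ :=
  ∫ a, F (update w j (a, (w j).2)) ∂ρ j

theorem integral_update_eq_fstAvg
    (hFj : ∀ w a b b', F (update w j (a, b)) = F (update w j (a, b'))) (w : ∀ i, Y i × Y i) :
    ∫ c, F (update w j c) ∂(ρ j).prod (ρ j) = fstAvg ρ j F w := by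
  simp_rw [hFj w _ _ (w j).2]
  simp [integral_fun_fst (f := fun a => F (update w j (a, (w j).2))), fstAvg]

theorem measurable_fstAvg (hFm : Measurable F) : Measurable (fstAvg ρ j F) := by
  have : Measurable fun p : (∀ i, Y i × Y i) × Y j => F (update p.1 j (p.2, (p.1 j).2)) := by
    fun_prop
  exact this.stronglyMeasurable.integral_prod_right'.measurable

theorem abs_fstAvg_le (hFC : ∀ w, |F w| ≤ C) (w : ∀ i, Y i × Y i) : |fstAvg ρ j F w| ≤ C := by
  simpa [fstAvg] using norm_integral_le_of_norm_le_const (μ := ρ j)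
    (ae_of_all _ fun a => (Real.norm_eq_abs _).trans_le (hFC (update w j (a, (w j).2))))

variable [Fintype ι]

theorem integral_mul_eq_integral_fstAvg_mul (hFm : Measurable F) (hFC : ∀ w, |F w| ≤ C)
    (hFj : ∀ w a b b', F (update w j (a, b)) = F (update w j (a, b')))
    (hGm : Measurable G) (hG1 : ∀ w, |G w| ≤ 1) (hGj : ∀ w c, G (update w j c) = G w) :
    ∫ w, F w * G w ∂Measure.pi (fun i => (ρ i).prod (ρ i))
      = ∫ w, fstAvg ρ j F w * G w ∂Measure.pi (fun i => (ρ i).prod (ρ i)) := by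
  rw [integral_eq_integral_integral_update (φ := fun w => F w * G w) j
    (.of_bound (hFm.mul hGm).aestronglyMeasurable C (ae_of_all _ fun w => by
      rw [Real.norm_eq_abs, abs_mul]
      exact (mul_le_of_le_one_right (abs_nonneg _) (hG1 w)).trans (hFC w)))]
  refine integral_congr_ae (ae_of_all _ fun w => ?_)
  simp only [hGj, integral_mul_const, integral_update_eq_fstAvg hFj]

theorem integral_mul_swap_eq_integral_fstAvg_sq (hFm : Measurable F) (hFC : ∀ w, |F w| ≤ C)
    (hFj : ∀ w a b b', F (update w j (a, b)) = F (update w j (a, b'))) :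
    ∫ w, F w * F (update w j (w j).swap) ∂Measure.pi (fun i => (ρ i).prod (ρ i))
      = ∫ w, fstAvg ρ j F w ^ 2 ∂Measure.pi (fun i => (ρ i).prod (ρ i)) := by
  have hswap : Measurable fun w : ∀ i, Y i × Y i => update w j (w j).swap := by fun_prop
  rw [integral_eq_integral_integral_update (φ := fun w => F w * F (update w j (w j).swap)) j
    (.of_bound (hFm.mul (hFm.comp hswap)).aestronglyMeasurable (C * C) (ae_of_all _ fun w => by
      rw [Real.norm_eq_abs, abs_mul]
      exact mul_le_mul (hFC _) (hFC _) (abs_nonneg _) ((abs_nonneg _).trans (hFC w))))]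
  refine integral_congr_ae (ae_of_all _ fun w => ?_)
  simp only [update_idem, update_self]
  simp_rw [hFj w _ _ (w j).2, Prod.fst_swap]
  exact (integral_prod_mul (fun a => F (update w j (a, (w j).2)))
    (fun a => F (update w j (a, (w j).2)))).trans (sq _).symm

theorem sq_integral_mul_le_integral_mul_swap (hFm : Measurable F) (hFC : ∀ w, |F w| ≤ C)
    (hFj : ∀ w a b b', F (update w j (a, b)) = F (update w j (a, b')))
    (hGm : Measurable G) (hG1 : ∀ w, |G w| ≤ 1) (hGj : ∀ w c, G (update w j c) = G w) :
    (∫ w, F w * G w ∂Measure.pi fun i => (ρ i).prod (ρ i)) ^ 2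
      ≤ ∫ w, F w * F (update w j (w j).swap) ∂Measure.pi fun i => (ρ i).prod (ρ i) := by
  set u := fstAvg ρ j F
  have hum : Measurable u := measurable_fstAvg hFm
  have huC : ∀ w, |u w| ≤ C := abs_fstAvg_le hFC
  rw [integral_mul_eq_integral_fstAvg_mul hFm hFC hFj hGm hG1 hGj,
    integral_mul_swap_eq_integral_fstAvg_sq hFm hFC hFj]
  calc (∫ w, u w * G w ∂Measure.pi fun i => (ρ i).prod (ρ i)) ^ 2
      ≤ ∫ w, (u w * G w) ^ 2 ∂Measure.pi fun i => (ρ i).prod (ρ i) :=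
        sq_integral_le_integral_sq (.of_bound (hum.mul hGm).aestronglyMeasurable C
          (ae_of_all _ fun w => by
            rw [Real.norm_eq_abs, abs_mul]
            exact (mul_le_of_le_one_right (abs_nonneg _) (hG1 w)).trans (huC w)))
    _ ≤ ∫ w, u w ^ 2 ∂Measure.pi fun i => (ρ i).prod (ρ i) := by
        refine integral_mono_of_nonneg (ae_of_all _ fun w => sq_nonneg _)
          (.of_bound (hum.pow_const 2).aestronglyMeasurable (C ^ 2) (ae_of_all _ fun w => ?_))
          (ae_of_all _ fun w => ?_)
        · rw [Real.norm_eq_abs, abs_pow]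
          exact pow_le_pow_left₀ (abs_nonneg _) (huC w) 2
        · show (u w * G w) ^ 2 ≤ u w ^ 2
          rw [mul_pow]
          exact mul_le_of_le_one_right (sq_nonneg _) ((sq_le_one_iff_abs_le_one _).2 (hG1 w))

end CauchySchwarz

section CubeVertex

variable {V : Type*} [DecidableEq V] {X : V → Type*}

/-- The spaces `X⁺_J` of all `J` are realised inside the one doubled space `∏ v, X v × X v`:
`cubeVertex T w` reads the coordinates in `T` from the second copy and all others from the first,
so that `cubeIntegral μ S g` is the `U^{V,S}` integral (`UJint_eq_cubeIntegral`). -/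
def cubeVertex (T : Finset V) (w : ∀ v, X v × X v) : ∀ v, X v :=
  fun v => if v ∈ T then (w v).2 else (w v).1

@[fun_prop]
theorem measurable_cubeVertex [∀ v, MeasurableSpace (X v)] (T : Finset V) :
    Measurable (cubeVertex (X := X) T) :=
  measurable_pi_lambda _ fun v => by unfold cubeVertex; split_ifs <;> fun_prop

@[simp]
theorem cubeVertex_empty (w : ∀ v, X v × X v) : cubeVertex ∅ w = fun v => (w v).1 := by
  ext v; simp [cubeVertex]

theorem cubeVertex_update (T : Finset V) (w : ∀ v, X v × X v) (j : V) (c : X j × X j) :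
    cubeVertex T (Function.update w j c)
      = Function.update (cubeVertex T w) j (if j ∈ T then c.2 else c.1) := by
  ext v
  by_cases hv : v = j
  · subst hv; simp [cubeVertex]
  · simp [cubeVertex, hv]

theorem cubeVertex_insert {T : Finset V} {j : V} (hj : j ∉ T) (w : ∀ v, X v × X v) :
    cubeVertex (insert j T) w = cubeVertex T (Function.update w j (w j).swap) := by
  rw [cubeVertex_update, if_neg hj]
  ext v
  by_cases hv : v = j
  · subst hv; simp [cubeVertex]
  · simp [cubeVertex, hv]

end CubeVertex

section CubeIntegral

variable {V : Type*} [Fintype V] [DecidableEq V] {X : V → Type*} [∀ v, MeasurableSpace (X v)]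
  {μ : ∀ v, Measure (X v)} [∀ v, IsProbabilityMeasure (μ v)]

variable (μ) in
def cubeIntegral (S : Finset V) (g : (∀ v, X v) → ℝ) : ℝ :=
  ∫ w, ∏ T ∈ S.powerset, g (cubeVertex T w) ∂Measure.pi fun v => (μ v).prod (μ v)

theorem cubeIntegral_empty {g : (∀ v, X v) → ℝ} (hg : Measurable g) :
    cubeIntegral μ ∅ g = ∫ x, g x ∂Measure.pi μ := by
  have h : MeasurePreserving (fun (w : ∀ v, X v × X v) v => (w v).1)
      (Measure.pi fun v => (μ v).prod (μ v)) (Measure.pi μ) :=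
    measurePreserving_pi _ _ fun v => measurePreserving_fst
  rw [← h.map_eq, integral_map h.measurable.aemeasurable (h.map_eq ▸ hg.aestronglyMeasurable)]
  simp [cubeIntegral]

theorem sq_cubeIntegral_mul_le {S : Finset V} {j : V} (hj : j ∉ S) {Ψ H : (∀ v, X v) → ℝ} {C : ℝ}
    (hΨm : Measurable Ψ) (hΨC : ∀ x, |Ψ x| ≤ C) (hHm : Measurable H) (hH1 : ∀ x, |H x| ≤ 1)
    (hHj : ∀ x a, H (Function.update x j a) = H x) :
    cubeIntegral μ S (fun x => Ψ x * H x) ^ 2 ≤ cubeIntegral μ (insert j S) Ψ := by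
  have hT : ∀ T ∈ S.powerset, j ∉ T := fun T hT h => hj (Finset.mem_powerset.mp hT h)
  have key := sq_integral_mul_le_integral_mul_swap (ρ := μ) (j := j)
    (F := fun w => ∏ T ∈ S.powerset, Ψ (cubeVertex T w))
    (G := fun w => ∏ T ∈ S.powerset, H (cubeVertex T w))
    (by fun_prop) (fun w => abs_prod_le_pow_card _ fun T _ => hΨC _)
    (fun w a b b' => Finset.prod_congr rfl fun T hTS => by
      rw [cubeVertex_update, cubeVertex_update, if_neg (hT T hTS), if_neg (hT T hTS)])
    (by fun_prop) (fun w => by simpa using abs_prod_le_pow_card S.powerset fun T _ => hH1 _)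
    (fun w c => Finset.prod_congr rfl fun T _ => by rw [cubeVertex_update, hHj])
  -- the cube on `insert j S` is two cubes on `S`, the second one with the `j`-th pair swapped
  unfold cubeIntegral
  simp_rw [Finset.prod_powerset_insert hj, Finset.prod_mul_distrib]
  refine key.trans_eq (integral_congr_ae (ae_of_all _ fun w => ?_))
  exact congrArg _ (Finset.prod_congr rfl fun T hTS => by rw [cubeVertex_insert (hT T hTS)])

theorem cubeIntegral_nonneg {S : Finset V} (hS : S.Nonempty) {g : (∀ v, X v) → ℝ} {C : ℝ}
    (hg : Measurable g) (hgC : ∀ x, |g x| ≤ C) : 0 ≤ cubeIntegral μ S g := by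
  obtain ⟨j, hj⟩ := hS
  have h := sq_cubeIntegral_mul_le (μ := μ) (Finset.notMem_erase j S) hg hgC (H := fun _ => 1)
    measurable_const (by simp) (fun _ _ => rfl)
  rw [Finset.insert_erase hj] at h
  exact (sq_nonneg _).trans (by simpa using h)

theorem abs_integral_mul_prod_pow_le_cubeIntegral {H : V → (∀ v, X v) → ℝ}
    (hHm : ∀ k, Measurable (H k)) (hH1 : ∀ k x, |H k x| ≤ 1)
    (hHk : ∀ k x a, H k (Function.update x k a) = H k x) (S : Finset V)
    {g : (∀ v, X v) → ℝ} {C : ℝ} (hg : Measurable g) (hgC : ∀ x, |g x| ≤ C) :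
    |∫ x, g x * ∏ k ∈ S, H k x ∂Measure.pi μ| ^ 2 ^ S.card ≤ |cubeIntegral μ S g| := by
  induction S using Finset.induction_on generalizing g with
  | empty => simp [cubeIntegral_empty hg]
  | insert j S hj ih =>
    have ihj := ih (g := fun x => g x * H j x) (hg.mul (hHm j)) fun x => by
      rw [abs_mul]
      exact (mul_le_of_le_one_right (abs_nonneg _) (hH1 j x)).trans (hgC x)
    have hsplit : ∫ x, g x * ∏ k ∈ insert j S, H k x ∂Measure.pi μ
        = ∫ x, g x * H j x * ∏ k ∈ S, H k x ∂Measure.pi μ := by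
      simp_rw [Finset.prod_insert hj, mul_assoc]
    calc |∫ x, g x * ∏ k ∈ insert j S, H k x ∂Measure.pi μ| ^ 2 ^ (insert j S).card
        = (|∫ x, g x * H j x * ∏ k ∈ S, H k x ∂Measure.pi μ| ^ 2 ^ S.card) ^ 2 := by
          rw [hsplit, Finset.card_insert_of_notMem hj, pow_succ, pow_mul]
      _ ≤ cubeIntegral μ S (fun x => g x * H j x) ^ 2 := by
          rw [← sq_abs (cubeIntegral _ _ _)]
          exact pow_le_pow_left₀ (by positivity) ihj 2
      _ ≤ cubeIntegral μ (insert j S) g := sq_cubeIntegral_mul_le hj hg hgC (hHm j) (hH1 j) (hHk j)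
      _ ≤ |cubeIntegral μ (insert j S) g| := le_abs_self _

end CubeIntegral

theorem measurePreserving_pi_prod_to_pi_bool {ι : Type*} [Fintype ι] {α : ι → Type*}
    [∀ i, MeasurableSpace (α i)] (μ : ∀ i, Measure (α i)) [∀ i, SigmaFinite (μ i)] :
    MeasurePreserving
      (fun (z : ∀ i, α i × α i) (q : ι × Bool) => if q.2 then (z q.1).2 else (z q.1).1)
      (Measure.pi fun i => (μ i).prod (μ i)) (Measure.pi fun q : ι × Bool => μ q.1) := by
  have hm : Measurable
      fun (z : ∀ i, α i × α i) (q : ι × Bool) => if q.2 then (z q.1).2 else (z q.1).1 :=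
    measurable_pi_lambda _ fun q => by
      cases q.2 <;> simp only [Bool.false_eq_true, if_false, if_true] <;> fun_prop
  refine ⟨hm, (Measure.pi_eq fun s hs => ?_).symm⟩
  have hpre : (fun (z : ∀ i, α i × α i) (q : ι × Bool) => if q.2 then (z q.1).2 else (z q.1).1)
      ⁻¹' Set.univ.pi s = Set.univ.pi fun i => s (i, false) ×ˢ s (i, true) := by
    ext z
    simp only [Set.mem_preimage, Set.mem_univ_pi, Set.mem_prod, Prod.forall, Bool.forall_bool]
    grind
  rw [Measure.map_apply hm (.univ_pi hs), hpre, Measure.pi_pi, Fintype.prod_prod_type]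
  simp [Measure.prod_prod, mul_comm]

section UJint

variable {V : Type} {X : V → Type} [∀ v, MeasurableSpace (X v)]

theorem measurable_recomb (J : Set V) (ω : ↥J → Bool) :
    Measurable fun p : (∀ v : ↥Jᶜ, X v) × (∀ q : ↥J × Bool, X q.1) => recomb X J p.1 p.2 ω :=
  measurable_pi_lambda _ fun v => by unfold recomb; split_ifs <;> fun_prop

variable [Fintype V] {μ : ∀ v, Measure (X v)} [∀ v, IsProbabilityMeasure (μ v)]

theorem measurePreserving_toUJintDomain (J : Set V) :
    MeasurePreserving
      (fun w : ∀ v, X v × X v => ((fun v : ↥Jᶜ => (w v).1),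
        fun q : ↥J × Bool => if q.2 then (w q.1).2 else (w q.1).1))
      (Measure.pi fun v => (μ v).prod (μ v))
      ((Measure.pi fun v : ↥Jᶜ => μ v).prod (Measure.pi fun q : ↥J × Bool => μ q.1)) := by
  have hsplit := measurePreserving_piEquivPiSubtypeProd (fun v => (μ v).prod (μ v)) (· ∈ J)
  have hfst := measurePreserving_pi (fun v : ↥Jᶜ => (μ v).prod (μ v)) (fun v => μ v)
    fun v => measurePreserving_fst
  have hbool := measurePreserving_pi_prod_to_pi_bool fun v : ↥J => μ v
  exact ((hfst.prod hbool).comp Measure.measurePreserving_swap).comp hsplit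

theorem UJint_eq_cubeIntegral [DecidableEq V] (J : Set V) {g : (∀ v, X v) → ℝ}
    (hg : Measurable g) :
    UJint X μ J g = cubeIntegral μ J.toFinset g := by
  have h := measurePreserving_toUJintDomain (X := X) (μ := μ) J
  unfold UJint cubeIntegral
  rw [← h.map_eq, integral_map h.measurable.aemeasurable (by
    rw [h.map_eq]
    exact (Finset.measurable_prod _ fun ω _ =>
      hg.comp (measurable_recomb J ω)).aestronglyMeasurable)]
  refine integral_congr_ae (ae_of_all _ fun w => ?_)
  refine Finset.prod_nbij' (fun ω => J.toFinset.filter fun v => ∃ h : v ∈ J, ω ⟨v, h⟩)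
    (fun T v => decide (↑v ∈ T)) ?_ ?_ ?_ ?_ ?_
  · exact fun ω _ => Finset.mem_coe.2 (Finset.mem_powerset.2 (Finset.filter_subset _ _))
  · simp
  · exact fun ω _ => funext fun v => by simp
  · intro T hT
    ext v
    simp only [Finset.mem_powerset] at hT
    simpa using fun hv => by simpa using hT hv
  · intro ω _
    congr 1
    ext v
    by_cases hv : v ∈ J <;> simp [recomb, cubeVertex, hv]

end UJint

theorem condExp_biSup_ae_eq_zero {Ω ι E : Type*} [NormedAddCommGroup E] [NormedSpace ℝ E]
    [CompleteSpace E] {m0 : MeasurableSpace Ω} {ν : Measure Ω} [IsFiniteMeasure ν]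
    {m : ι → MeasurableSpace Ω} (hm : ∀ i, m i ≤ m0) {S : Set ι} {f : Ω → E}
    (hf : Integrable f ν)
    (h : ∀ t : Finset ι, ↑t ⊆ S → ∀ A : ι → Set Ω, (∀ i ∈ t, MeasurableSet[m i] (A i)) →
      ∫ x in ⋂ i ∈ t, A i, f x ∂ν = 0) :
    ν[f | ⨆ i ∈ S, m i] =ᵐ[ν] 0 := by
  have hmS : ⨆ i ∈ S, m i ≤ m0 := iSup₂_le fun i _ => hm i
  have hzero : ∀ s, MeasurableSet[⨆ i ∈ S, m i] s → ∫ x in s, f x ∂ν = 0 := by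
    intro s hs
    induction s, hs using MeasurableSpace.induction_on_inter
        (generateFrom_piiUnionInter_measurableSet m S).symm
        (isPiSystem_piiUnionInter _ (fun i => @MeasurableSpace.isPiSystem_measurableSet _ (m i)) S)
      with
    | empty => simp
    | basic s hs =>
      obtain ⟨t, htS, A, hA, rfl⟩ := hs
      exact h t htS A hA
    | compl s hs ih =>
      have huniv : ∫ x, f x ∂ν = 0 := by simpa using h ∅ (by simp) (fun _ => ∅) (by simp)
      rw [← integral_add_compl (hmS s hs) hf, ih, zero_add] at huniv
      exact huniv
    | iUnion g hdisj hg ih =>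
      rw [integral_iUnion (fun i => hmS _ (hg i)) hdisj hf.integrableOn]
      simp [ih]
  have : SigmaFinite (ν.trim hmS) := by
    have := isFiniteMeasure_trim (μ := ν) hmS
    infer_instance
  exact (ae_eq_condExp_of_forall_setIntegral_eq hmS hf (fun s _ _ => integrableOn_zero)
    (fun s hs _ => by simp [hzero s hs]) aestronglyMeasurable_const).symm

section Cylinder

variable {V : Type} {X : V → Type} [∀ v, MeasurableSpace (X v)]

theorem cylAlg_le (I : Set V) : cylAlg X I ≤ MeasurableSpace.pi :=
  (measurable_pi_lambda (fun (x : ∀ v, X v) (i : ↥I) => x i) fun _ =>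
    measurable_pi_apply _).comap_le

theorem update_mem_iff_of_measurableSet_cylAlg [DecidableEq V] {I : Set V} {A : Set (∀ v, X v)}
    (hA : MeasurableSet[cylAlg X I] A) {k : V} (hk : k ∉ I) (x : ∀ v, X v) (a : X k) :
    Function.update x k a ∈ A ↔ x ∈ A := by
  obtain ⟨B, -, rfl⟩ := hA
  have : (fun i : ↥I => Function.update x k a i) = fun i : ↥I => x i :=
    funext fun i => Function.update_of_ne (fun h => hk (by rw [← h]; exact i.2)) _ _
  simp only [Set.mem_preimage, this]

theorem exists_prod_eq_indicator_biInter [DecidableEq V] {t : Finset (Set V)}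
    {A : Set V → Set (∀ v, X v)} (hA : ∀ I ∈ t, MeasurableSet[cylAlg X I] (A I))
    {J : Finset V} (hJ : ∀ I ∈ t, ∃ k ∈ J, k ∉ I) :
    ∃ H : V → (∀ v, X v) → ℝ, (∀ k, Measurable (H k)) ∧ (∀ k x, |H k x| ≤ 1) ∧
      (∀ k x a, H k (Function.update x k a) = H k x) ∧
      ∀ x, ∏ k ∈ J, H k x = (⋂ I ∈ t, A I).indicator 1 x := by
  let pick : t → V := fun I => (hJ I I.2).choose
  have hpickJ : ∀ I, pick I ∈ J := fun I => (hJ I I.2).choose_spec.1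
  have hpickI : ∀ I : t, pick I ∉ I.1 := fun I => (hJ I I.2).choose_spec.2
  refine ⟨fun k x => ∏ I ∈ t.attach with pick I = k, (A I).indicator 1 x, fun k => ?_,
    fun k x => ?_, fun k x a => ?_, fun x => ?_⟩
  · exact Finset.measurable_prod _ fun I _ =>
      measurable_one.indicator (cylAlg_le _ _ (hA I I.2))
  · simpa using abs_prod_le_pow_card (C := 1) _ fun I _ => by
      by_cases hx : x ∈ A I <;> simp [hx]
  · refine Finset.prod_congr rfl fun I hI => ?_
    obtain rfl := (Finset.mem_filter.1 hI).2
    simp only [Set.indicator_apply, Pi.one_apply,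
      update_mem_iff_of_measurableSet_cylAlg (hA I I.2) (hpickI I)]
  · rw [Finset.prod_fiberwise_of_maps_to (fun I _ => hpickJ I), Finset.prod_attach t
      (fun I => (A I).indicator 1 x), prod_indicator_const_apply, one_pow]

end Cylinder

section UNorm

variable {V : Type} [Fintype V] [DecidableEq V] {X : V → Type} [∀ v, MeasurableSpace (X v)]
  {μ : ∀ v, Measure (X v)}

theorem abs_integral_mul_le_UFamNorm {𝓙 : Finset (Set V)} {χ : (∀ v, X v) → ℝ}
    (hχ : Integrable χ (Measure.pi μ))
    (hbound : ∀ g : (∀ v, X v) → ℝ, Measurable g → (∃ C, ∀ x, |g x| ≤ C) →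
      |∫ x, g x * χ x ∂Measure.pi μ|
        ≤ (∏ J ∈ 𝓙, UJnorm X μ J g ^ 2 ^ J.ncard) ^ ((1 : ℝ) / ∑ J ∈ 𝓙, (2 : ℝ) ^ J.ncard))
    {f : (∀ v, X v) → ℝ} (hfm : Measurable f) (hfb : ∃ C, ∀ x, |f x| ≤ C) :
    |∫ x, f x * χ x ∂Measure.pi μ| ≤ UFamNorm X μ 𝓙 f := by
  refine le_csInf ⟨_, 0, fun _ => f, fun _ => ⟨hfb, hfm⟩, fun x => by simp, rfl⟩ ?_
  rintro r ⟨m, g, hg, hfg, rfl⟩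
  have hint : ∀ i ∈ Finset.range (m + 1), Integrable (fun x => g i x * χ x) (Measure.pi μ) :=
    fun i _ => hχ.bdd_mul (hg i).2.aestronglyMeasurable (ae_of_all _ (hg i).1.choose_spec)
  calc |∫ x, f x * χ x ∂Measure.pi μ|
      = |∑ i ∈ Finset.range (m + 1), ∫ x, g i x * χ x ∂Measure.pi μ| := by
        rw [← integral_finsetSum _ hint]
        simp_rw [hfg, Finset.sum_mul]
    _ ≤ ∑ i ∈ Finset.range (m + 1), |∫ x, g i x * χ x ∂Measure.pi μ| :=
        Finset.abs_sum_le_sum_abs _ _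
    _ ≤ _ := Finset.sum_le_sum fun i _ => hbound (g i) (hg i).2 (hg i).1

theorem UJnorm_pow_eq_UJint {J : Set V} {g : (∀ v, X v) → ℝ} (h : 0 ≤ UJint X μ J g) :
    UJnorm X μ J g ^ 2 ^ J.ncard = UJint X μ J g := by
  rw [UJnorm, ← Real.rpow_natCast, ← Real.rpow_mul h]
  push_cast
  rw [one_div, inv_mul_cancel₀ (by positivity), Real.rpow_one]

variable [∀ v, IsProbabilityMeasure (μ v)]

theorem pow_abs_integral_mul_indicator_le_UJnorm {J : Set V} (hJ : J.Nonempty)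
    {t : Finset (Set V)} {A : Set V → Set (∀ v, X v)}
    (hA : ∀ I ∈ t, MeasurableSet[cylAlg X I] (A I)) (hJt : ∀ I ∈ t, ¬ J ⊆ I)
    {g : (∀ v, X v) → ℝ} {C : ℝ} (hg : Measurable g) (hgC : ∀ x, |g x| ≤ C) :
    |∫ x, g x * (⋂ I ∈ t, A I).indicator 1 x ∂Measure.pi μ| ^ 2 ^ J.ncard
      ≤ UJnorm X μ J g ^ 2 ^ J.ncard := by
  obtain ⟨H, hHm, hH1, hHk, hHχ⟩ := exists_prod_eq_indicator_biInter hA (J := J.toFinset)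
    fun I hI => by simpa [Set.not_subset] using hJt I hI
  have hcube := UJint_eq_cubeIntegral (μ := μ) J hg
  have hnonneg : 0 ≤ cubeIntegral μ J.toFinset g :=
    cubeIntegral_nonneg (Set.toFinset_nonempty.2 hJ) hg hgC
  rw [UJnorm_pow_eq_UJint (hcube ▸ hnonneg), hcube, Set.ncard_eq_toFinset_card',
    ← abs_of_nonneg hnonneg]
  simp_rw [← hHχ]
  exact abs_integral_mul_prod_pow_le_cubeIntegral hHm hH1 hHk _ hg hgC

theorem abs_integral_mul_indicator_le_rpow_prod_UJnorm {𝓙 : Finset (Set V)} (h𝓙 : 𝓙.Nonempty)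
    (h𝓙ne : ∀ J ∈ 𝓙, J.Nonempty) {t : Finset (Set V)} {A : Set V → Set (∀ v, X v)}
    (hA : ∀ I ∈ t, MeasurableSet[cylAlg X I] (A I)) (h𝓙t : ∀ J ∈ 𝓙, ∀ I ∈ t, ¬ J ⊆ I)
    {g : (∀ v, X v) → ℝ} {C : ℝ} (hg : Measurable g) (hgC : ∀ x, |g x| ≤ C) :
    |∫ x, g x * (⋂ I ∈ t, A I).indicator 1 x ∂Measure.pi μ|
      ≤ (∏ J ∈ 𝓙, UJnorm X μ J g ^ 2 ^ J.ncard) ^ ((1 : ℝ) / ∑ J ∈ 𝓙, (2 : ℝ) ^ J.ncard) := by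
  simpa only [Nat.cast_pow, Nat.cast_ofNat] using
    le_rpow_prod_of_pow_le h𝓙 (n := fun J => 2 ^ J.ncard) (fun _ _ => by positivity)
      (abs_nonneg _) fun J hJ =>
        pow_abs_integral_mul_indicator_le_UJnorm (h𝓙ne J hJ) hA (h𝓙t J hJ) hg hgC

end UNorm

theorem UFamNorm_pos_of_condexp_general (V : Type) [Fintype V] [DecidableEq V]
    (X : V → Type) [∀ v, MeasurableSpace (X v)]
    (μ : ∀ v, Measure (X v)) [∀ v, IsProbabilityMeasure (μ v)]
    (𝓘 : Set (Set V)) (h𝓘 : 𝓘.Nonempty)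
    (𝓙 : Finset (Set V)) (h𝓙 : ↑𝓙 = Iperp 𝓘) (h𝓙ne : 𝓙.Nonempty)
    (f : (∀ v, X v) → ℝ) (hfb : ∃ C, ∀ x, |f x| ≤ C) (hfm : Measurable f)
    (h : 0 < eLpNorm (MeasureTheory.condExp (cylAlgFam X 𝓘) (Measure.pi μ) f) 2
        (Measure.pi μ)) :
    0 < UFamNorm X μ 𝓙 f := by
  obtain ⟨C, hfC⟩ := hfb
  have hfi : Integrable f (Measure.pi μ) := .of_bound hfm.aestronglyMeasurable C (ae_of_all _ hfC)
  obtain ⟨t, ht𝓘, A, hA, hfA⟩ : ∃ t : Finset (Set V), ↑t ⊆ 𝓘 ∧ ∃ A : Set V → Set (∀ v, X v),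
      (∀ I ∈ t, MeasurableSet[cylAlg X I] (A I)) ∧ ∫ x in ⋂ I ∈ t, A I, f x ∂Measure.pi μ ≠ 0 := by
    by_contra! hcon
    have h0 := condExp_biSup_ae_eq_zero (fun I => cylAlg_le (X := X) I) hfi hcon
    exact h.ne' ((eLpNorm_congr_ae h0).trans (eLpNorm_zero (p := 2)))
  have hχm : MeasurableSet (⋂ I ∈ t, A I) :=
    t.measurableSet_biInter fun I hI => cylAlg_le I _ (hA I hI)
  have hfχ : ∫ x, f x * (⋂ I ∈ t, A I).indicator 1 x ∂Measure.pi μ ≠ 0 := by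
    simp_rw [← Set.indicator_mul_right, Pi.one_apply, mul_one]
    rwa [integral_indicator hχm]
  obtain ⟨I₀, hI₀⟩ := h𝓘
  have hJ𝓘 : ∀ J ∈ 𝓙, ∀ I ∈ 𝓘, ¬ J ⊆ I := fun J hJ => (h𝓙 ▸ hJ : J ∈ Iperp 𝓘).1
  refine (abs_pos.2 hfχ).trans_le (abs_integral_mul_le_UFamNorm
    ((integrable_const 1).indicator hχm) (fun g hg ⟨Cg, hgC⟩ => ?_) hfm ⟨C, hfC⟩)
  exact abs_integral_mul_indicator_le_rpow_prod_UJnorm h𝓙ne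
    (fun J hJ => Set.nonempty_iff_ne_empty.2 fun hJ0 => hJ𝓘 J hJ I₀ hI₀ (by simp [hJ0])) hA
    (fun J hJ I hI => hJ𝓘 J hJ I (ht𝓘 hI)) hg hgC

/-- If `‖E[f | 𝒞_𝓘]‖_{L²(μ)} > 0` then `‖f‖_{U^{V,𝓘^⊥}} > 0`. -/
theorem UFamNorm_pos_of_condexp (V : Type) [Fintype V] [DecidableEq V] [Nonempty V]
    (X : V → Type) [∀ v, MeasurableSpace (X v)]
    (μ : ∀ v, Measure (X v)) [∀ v, IsProbabilityMeasure (μ v)]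
    (𝓘 : Set (Set V)) (h𝓘 : 𝓘.Nonempty)
    (𝓙 : Finset (Set V)) (h𝓙 : ↑𝓙 = Iperp 𝓘) (h𝓙ne : 𝓙.Nonempty)
    (f : (∀ v, X v) → ℝ) (hfb : ∃ C, ∀ x, |f x| ≤ C) (hfm : Measurable f)
    (h : 0 < eLpNorm (MeasureTheory.condExp (cylAlgFam X 𝓘) (Measure.pi μ) f) 2
        (Measure.pi μ)) :
    0 < UFamNorm X μ 𝓙 f :=
  UFamNorm_pos_of_condexp_general V X μ 𝓘 h𝓘 𝓙 h𝓙 h𝓙ne f hfb hfm h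

end
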